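/- Suppose s is an even integer ≥ 4 and define T(s) = ∑_{j=s/2}^∞ ∏_{k=1}^{j} 3/(3^k − 1). Then T(s) ≤ (3^{s/2}/(3^{s/2}−1)) · ∏_{k=1}^{s/2 −1} 1/(3^k − 1) · (1 + ∑_{j=s/2+1}^∞ ∏_{k=s/2+1}^{j} 3/(3^k−1)) and consequently T(s) · ∏_{k=0}^∞ (1+3^{-k})^{-1} ≤ ∏_{k=1}^∞ (1 − 3^{-k})^{-1} · 3^{−s(s−2)/8}. -/

import Mathlib

/-!
With `m = s/2`, splitting off the first `m` factors gives the identity `T(s) = P_m (1 + S_m)`, where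
`P_m = ∏_{k ≤ m} 3/(3^k-1)` and `S_m = ∑_{j > m} ∏_{m < k ≤ j} 3/(3^k-1)`; the first claim is this
identity. For `k > m ≥ 2` every factor `3/(3^k-1)` is at most `1/2`, so `S_m ≤ ∑_{i ≥ 1} 2^{-i} = 1`,
while `∏_{k ≥ 0} (1 + 3^{-k})⁻¹ ≤ 1/2` because its `k = 0` factor is `1/2` and the others are at
most `1`. Hence `T(s) ∏_{k ≥ 0} (1 + 3^{-k})⁻¹ ≤ P_m = 3^{-m(m-1)/2} ∏_{k=1}^{m} (1 - 3^{-k})⁻¹`,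
and `m(m-1)/2 = s(s-2)/8`.
-/

open scoped BigOperators

/-- The tail sum T(s) = ∑_{j = s/2}^∞ ∏_{k=1}^{j} 3/(3^k - 1). -/
noncomputable def tailT (s : ℕ) : ℝ :=
  ∑' j : ℕ, if s / 2 ≤ j then ∏ k ∈ Finset.Icc 1 j, 3 / ((3 : ℝ) ^ k - 1) else 0

open Finset

theorem tsum_ite_le_eq_tsum_add {α : Type*} [AddCommMonoid α] [TopologicalSpace α]
    (f : ℕ → α) (c : ℕ) :
    ∑' j, (if c ≤ j then f j else 0) = ∑' i, f (i + c) := by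
  rw [← (add_left_injective c).tsum_eq]
  · simp
  · intro j hj
    have hcj : c ≤ j := by by_contra h; simp [h] at hj
    exact ⟨j - c, Nat.sub_add_cancel hcj⟩

theorem prod_Icc_one_eq_mul_prod_Ioc {M : Type*} [CommMonoid M] (f : ℕ → M) {m j : ℕ}
    (h : m ≤ j) : ∏ k ∈ Icc 1 j, f k = (∏ k ∈ Icc 1 m, f k) * ∏ k ∈ Ioc m j, f k := by
  rw [← zero_add 1, Icc_add_one_left_eq_Ioc, Icc_add_one_left_eq_Ioc]
  exact (prod_Ioc_consecutive f m.zero_le h).symm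

theorem tsum_ite_prod_Icc_eq (r : ℕ → ℝ) (m : ℕ)
    (hsum : Summable fun i => ∏ k ∈ Ioc m (i + m), r k) :
    ∑' j, (if m ≤ j then ∏ k ∈ Icc 1 j, r k else 0) =
      (∏ k ∈ Icc 1 m, r k) *
        (1 + ∑' j, if m + 1 ≤ j then ∏ k ∈ Icc (m + 1) j, r k else 0) := by
  rw [tsum_ite_le_eq_tsum_add, tsum_ite_le_eq_tsum_add]
  simp_rw [prod_Icc_one_eq_mul_prod_Ioc r (Nat.le_add_left m _)]
  rw [tsum_mul_left, hsum.tsum_eq_zero_add]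
  simp [Icc_add_one_left_eq_Ioc, add_right_comm, ← add_assoc]

section HalfBoundedFactors

variable {r : ℕ → ℝ} {m : ℕ}

theorem prod_Ioc_add_le_half_pow (hr₀ : ∀ k > m, 0 ≤ r k) (hr : ∀ k > m, r k ≤ 1 / 2) (i : ℕ) :
    ∏ k ∈ Ioc m (i + m), r k ≤ (1 / 2) ^ i :=
  calc ∏ k ∈ Ioc m (i + m), r k ≤ ∏ _k ∈ Ioc m (i + m), (1 / 2 : ℝ) :=
        prod_le_prod (fun k hk => hr₀ k (mem_Ioc.1 hk).1) fun k hk => hr k (mem_Ioc.1 hk).1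
    _ = (1 / 2) ^ i := by simp

theorem summable_prod_Ioc_add (hr₀ : ∀ k > m, 0 ≤ r k) (hr : ∀ k > m, r k ≤ 1 / 2) :
    Summable fun i => ∏ k ∈ Ioc m (i + m), r k :=
  summable_geometric_two.of_nonneg_of_le
    (fun _ => prod_nonneg fun k hk => hr₀ k (mem_Ioc.1 hk).1) (prod_Ioc_add_le_half_pow hr₀ hr)

theorem tsum_ite_prod_Icc_le_one (hr₀ : ∀ k > m, 0 ≤ r k) (hr : ∀ k > m, r k ≤ 1 / 2) :
    ∑' j, (if m + 1 ≤ j then ∏ k ∈ Icc (m + 1) j, r k else 0) ≤ 1 := by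
  have hsum := (summable_nat_add_iff 1).2 (summable_prod_Ioc_add hr₀ hr)
  calc ∑' j, (if m + 1 ≤ j then ∏ k ∈ Icc (m + 1) j, r k else 0)
      = ∑' i, ∏ k ∈ Ioc m (i + 1 + m), r k := by
        rw [tsum_ite_le_eq_tsum_add]
        simp [Icc_add_one_left_eq_Ioc, add_right_comm, ← add_assoc]
    _ ≤ ∑' i, (1 / 2 : ℝ) ^ (i + 1) :=
        hsum.tsum_le_tsum (fun i => prod_Ioc_add_le_half_pow hr₀ hr (i + 1))
          ((summable_nat_add_iff 1).2 summable_geometric_two)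
    _ = 1 := by simp_rw [pow_succ, tsum_mul_right, tsum_geometric_two]; norm_num

end HalfBoundedFactors

theorem three_div_three_pow_sub_one_pos {k : ℕ} (hk : 1 ≤ k) : 0 < 3 / ((3 : ℝ) ^ k - 1) := by
  have : (3 : ℝ) ≤ 3 ^ k := le_self_pow₀ (by norm_num) (by omega)
  exact div_pos three_pos (by linarith)

theorem three_div_three_pow_sub_one_le_half {k : ℕ} (hk : 3 ≤ k) :
    3 / ((3 : ℝ) ^ k - 1) ≤ 1 / 2 := by
  have : (3 : ℝ) ^ 3 ≤ 3 ^ k := pow_le_pow_right₀ (by norm_num) hk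
  rw [div_le_div_iff₀ (by linarith) two_pos]
  linarith

theorem prod_Icc_three_div_eq {m : ℕ} (hm : 1 ≤ m) :
    ∏ k ∈ Icc 1 m, 3 / ((3 : ℝ) ^ k - 1) =
      (3 ^ m / (3 ^ m - 1)) * ∏ k ∈ Icc 1 (m - 1), 1 / ((3 : ℝ) ^ k - 1) := by
  obtain ⟨n, rfl⟩ := Nat.exists_eq_add_of_le' hm
  simp_rw [Nat.add_sub_cancel, prod_Icc_succ_top (Nat.le_add_left 1 n), div_eq_mul_one_div (3 : ℝ),
    prod_mul_distrib, prod_const, Nat.card_Icc, Nat.add_sub_cancel, pow_succ]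
  ring

theorem prod_Icc_three_div_eq_inv_mul_prod (m : ℕ) :
    ∏ k ∈ Icc 1 m, 3 / ((3 : ℝ) ^ k - 1) =
      (3 ^ (m * (m - 1) / 2))⁻¹ * ∏ k ∈ range m, (1 - ((3 : ℝ) ^ (k + 1))⁻¹)⁻¹ := by
  have hfactor : ∀ k : ℕ,
      3 / ((3 : ℝ) ^ (k + 1) - 1) = (3 ^ k)⁻¹ * (1 - (3 ^ (k + 1))⁻¹)⁻¹ := by
    intro k
    have : (1 : ℝ) < 3 ^ (k + 1) := one_lt_pow₀ (by norm_num) k.succ_ne_zero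
    field_simp
    ring
  rw [← Ico_add_one_right_eq_Icc, prod_Ico_eq_prod_range, Nat.add_sub_cancel]
  simp_rw [add_comm 1, hfactor]
  rw [prod_mul_distrib, prod_inv_distrib, prod_pow_eq_pow_sum, sum_range_id]

theorem Real.prod_le_tprod_of_one_le {ι : Type*} {f : ι → ℝ} (hf : ∀ i, 1 ≤ f i)
    (hlog : Summable fun i => Real.log (f i)) (s : Finset ι) : ∏ i ∈ s, f i ≤ ∏' i, f i := by
  have hpos : ∀ i, 0 < f i := fun i => one_pos.trans_le (hf i)
  rw [← Real.rexp_tsum_eq_tprod hpos hlog, ← Real.exp_log (prod_pos fun i _ => hpos i),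
    Real.log_prod fun i _ => (hpos i).ne']
  exact Real.exp_le_exp.2 (hlog.sum_le_tsum s fun i _ => Real.log_nonneg (hf i))

theorem summable_inv_three_pow : Summable fun k : ℕ => ((3 : ℝ) ^ k)⁻¹ := by
  simpa only [inv_pow] using
    summable_geometric_of_lt_one (by norm_num) (by norm_num : (3 : ℝ)⁻¹ < 1)

theorem tprod_inv_one_add_inv_three_pow_le_half :
    ∏' k : ℕ, (1 + ((3 : ℝ) ^ k)⁻¹)⁻¹ ≤ 1 / 2 := by
  have hlog := Real.summable_log_one_add_of_summable summable_inv_three_pow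
  have hone : ∀ k : ℕ, 1 ≤ 1 + ((3 : ℝ) ^ k)⁻¹ := fun k => le_add_of_nonneg_right (by positivity)
  have htwo : 2 ≤ ∏' k : ℕ, (1 + ((3 : ℝ) ^ k)⁻¹) := by
    simpa [one_add_one_eq_two] using Real.prod_le_tprod_of_one_le hone hlog {0}
  rw [(Real.multipliable_one_add_of_summable summable_inv_three_pow).tprod_inv₀ (by positivity),
    one_div]
  exact inv_anti₀ two_pos htwo

theorem prod_range_le_tprod_inv_one_sub_inv_three_pow (m : ℕ) :
    ∏ k ∈ range m, (1 - ((3 : ℝ) ^ (k + 1))⁻¹)⁻¹ ≤ ∏' k : ℕ, (1 - ((3 : ℝ) ^ (k + 1))⁻¹)⁻¹ := by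
  have hone : ∀ k : ℕ, 1 ≤ (1 - ((3 : ℝ) ^ (k + 1))⁻¹)⁻¹ := fun k => by
    have hpos : (0 : ℝ) < ((3 : ℝ) ^ (k + 1))⁻¹ := by positivity
    have hlt : ((3 : ℝ) ^ (k + 1))⁻¹ < 1 :=
      inv_lt_one_of_one_lt₀ (one_lt_pow₀ (by norm_num) k.succ_ne_zero)
    exact (one_le_inv₀ (by linarith)).2 (by linarith)
  have hlog := Real.summable_log_one_add_of_summable
    ((summable_nat_add_iff 1).2 summable_inv_three_pow).neg
  exact Real.prod_le_tprod_of_one_le hone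
    (by simpa only [Real.log_inv, ← sub_eq_add_neg] using hlog.neg) _

theorem add_self_mul_sub_two_div_eight (m : ℕ) :
    (m + m) * (m + m - 2) / 8 = m * (m - 1) / 2 := by
  have : (m + m) * (m + m - 2) = 4 * (m * (m - 1)) := by
    rcases m with _ | n
    · rfl
    · rw [show n + 1 + (n + 1) - 2 = 2 * n by omega, Nat.add_sub_cancel]; ring
  rw [this, show 8 = 4 * 2 from rfl, Nat.mul_div_mul_left _ _ four_pos]

theorem three_div_three_pow_sub_one_bounds {s : ℕ} (hs : 4 ≤ s) :
    (∀ k > s / 2, 0 ≤ 3 / ((3 : ℝ) ^ k - 1)) ∧ ∀ k > s / 2, 3 / ((3 : ℝ) ^ k - 1) ≤ 1 / 2 :=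
  ⟨fun _ hk => (three_div_three_pow_sub_one_pos (by omega)).le,
    fun _ hk => three_div_three_pow_sub_one_le_half (by omega)⟩

theorem tailT_eq {s : ℕ} (hs : 4 ≤ s) :
    tailT s = (∏ k ∈ Icc 1 (s / 2), 3 / ((3 : ℝ) ^ k - 1)) *
      (1 + ∑' j, if s / 2 + 1 ≤ j then ∏ k ∈ Icc (s / 2 + 1) j, 3 / ((3 : ℝ) ^ k - 1) else 0) :=
  let ⟨hr₀, hr⟩ := three_div_three_pow_sub_one_bounds hs
  tsum_ite_prod_Icc_eq _ _ (summable_prod_Ioc_add hr₀ hr)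

theorem tailT_mul_tprod_le_prod {s : ℕ} (hs : 4 ≤ s) :
    tailT s * ∏' k : ℕ, (1 + ((3 : ℝ) ^ k)⁻¹)⁻¹ ≤ ∏ k ∈ Icc 1 (s / 2), 3 / ((3 : ℝ) ^ k - 1) := by
  obtain ⟨hr₀, hr⟩ := three_div_three_pow_sub_one_bounds hs
  have hP : 0 ≤ ∏ k ∈ Icc 1 (s / 2), 3 / ((3 : ℝ) ^ k - 1) :=
    prod_nonneg fun k hk => (three_div_three_pow_sub_one_pos (mem_Icc.1 hk).1).le
  have hS := tsum_ite_prod_Icc_le_one hr₀ hr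
  have hA := tprod_inv_one_add_inv_three_pow_le_half
  have hA₀ : 0 ≤ ∏' k : ℕ, (1 + ((3 : ℝ) ^ k)⁻¹)⁻¹ := tprod_nonneg fun k => by positivity
  rw [tailT_eq hs, mul_assoc]
  calc _ ≤ (∏ k ∈ Icc 1 (s / 2), 3 / ((3 : ℝ) ^ k - 1)) * (2 * (1 / 2)) := by gcongr; linarith
    _ = _ := by norm_num

/-- For even s ≥ 4:
T(s) ≤ (3^{s/2}/(3^{s/2}-1)) · ∏_{k=1}^{s/2-1} 1/(3^k-1) ·
       (1 + ∑_{j=s/2+1}^∞ ∏_{k=s/2+1}^{j} 3/(3^k-1)),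
and consequently T(s) · ∏_{k=0}^∞ (1+3^{-k})⁻¹ ≤ ∏_{k=1}^∞ (1-3^{-k})⁻¹ · 3^{-s(s-2)/8}. -/
theorem tail_sum_bound (s : ℕ) (hs : Even s) (hs4 : 4 ≤ s) :
    tailT s ≤
      ((3 : ℝ) ^ (s / 2) / ((3 : ℝ) ^ (s / 2) - 1)) *
        (∏ k ∈ Finset.Icc 1 (s / 2 - 1), 1 / ((3 : ℝ) ^ k - 1)) *
        (1 + ∑' j : ℕ, if s / 2 + 1 ≤ j then
          ∏ k ∈ Finset.Icc (s / 2 + 1) j, 3 / ((3 : ℝ) ^ k - 1) else 0) ∧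
    tailT s * (∏' k : ℕ, (1 + ((3 : ℝ) ^ k)⁻¹)⁻¹) ≤
      (∏' k : ℕ, (1 - ((3 : ℝ) ^ (k + 1))⁻¹)⁻¹) * ((3 : ℝ) ^ (s * (s - 2) / 8))⁻¹ := by
  obtain ⟨m, rfl⟩ := hs
  have hm : (m + m) / 2 = m := by omega
  refine ⟨by rw [tailT_eq hs4, hm, prod_Icc_three_div_eq (by omega)], ?_⟩
  calc _ ≤ ∏ k ∈ Icc 1 m, 3 / ((3 : ℝ) ^ k - 1) := by
        simpa only [hm] using tailT_mul_tprod_le_prod hs4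
    _ = (3 ^ (m * (m - 1) / 2))⁻¹ * ∏ k ∈ range m, (1 - ((3 : ℝ) ^ (k + 1))⁻¹)⁻¹ :=
        prod_Icc_three_div_eq_inv_mul_prod m
    _ ≤ _ := by
        rw [add_self_mul_sub_two_div_eight, mul_comm]
        gcongr
        exact prod_range_le_tprod_inv_one_sub_inv_three_pow m
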